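/- arXiv:1912.12212 — 2 statements merged into one kernel-verified Lean document; each statement's English description precedes it below -/
import Mathlib

section
/- Let M ∈ ℂ^{n×n} with entries m_{i,k} (indices 0,…,n−1), and define m̂_{i,k} = m_{i,k} − (−1)^{g(k)} · m_{(i−1) mod n, (k+1) mod n}, i.e., m̂_{i,k} is the (i,k) entry of the Stein displacement Δ_{Z_1,Z_{−1}}[M]. Then M admits the decomposition M = (1/2) · Σ_{i=0}^{n−1} Σ_{k=0}^{n−1} m̂_{i,k} · Z_1^i · J · Z_{−1}^{n−1−k}. -/
open Matrix

/-- The `n × n` unit `f`-circulant matrix `Z_f`: entries `(Z_f)_{i,k} = 1` if `i = k+1`,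
`(Z_f)_{0,n−1} = f`, and `0` otherwise. -/
noncomputable def Zf (n : ℕ) (f : ℝ) : Matrix (Fin n) (Fin n) ℂ :=
  Matrix.of fun i k =>
    if (i : ℕ) = (k : ℕ) + 1 then 1
    else if (i : ℕ) = 0 ∧ (k : ℕ) = n - 1 then (f : ℂ)
    else 0

/-- The `n × n` reversal matrix `J`: entries `J_{i,k} = 1` if `i + k = n − 1`, else `0`. -/
noncomputable def Jrev (n : ℕ) : Matrix (Fin n) (Fin n) ℂ :=
  Matrix.of fun i k => if (i : ℕ) + (k : ℕ) = n - 1 then 1 else 0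

/-- The `f`-circulant matrix `Z_f(v)` generated by a vector `v ∈ ℂ^n`:
`(Z_f(v))_{i,k} = v_{i−k}` if `i ≥ k`, and `(Z_f(v))_{i,k} = f · v_{n+i−k}` if `i < k`. -/
noncomputable def ZfVec (n : ℕ) (f : ℝ) (v : Fin n → ℂ) : Matrix (Fin n) (Fin n) ℂ :=
  Matrix.of fun i k =>
    (if (k : ℕ) ≤ (i : ℕ) then 1 else (f : ℂ)) *
      v ⟨((i : ℕ) + n - (k : ℕ)) % n, Nat.mod_lt _ i.pos⟩

/-- g(k) = 0 for 0 ≤ k ≤ n−2 and g(n−1) = 1. -/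
def gfun (n k : ℕ) : ℕ := if k = n - 1 then 1 else 0

/-! With `A = Z_1` and `B = Z_{-1}` one has `A ^ n = 1` and `B ^ n = -1`, so the telescoping sum
`∑_{j<n} A ^ j * Δ_{A,B}[M] * B ^ j = M - A ^ n * M * B ^ n` equals `2 • M`. Expanding `Δ_{A,B}[M]`
in matrix units and writing `E_{i,k} = A ^ i * E_{0,n-1} * B ^ (n-1-k)`, the powers of `A` and `B`
commute outwards, and `∑_j A ^ j * E_{0,n-1} * B ^ j = J` turns that sum into
`∑_{i,k} m̂_{i,k} • A ^ i * J * B ^ (n-1-k)`. -/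

lemma add_sub_one_mod_self {i n : ℕ} (hi : i < n) :
    (i + n - 1) % n = if i = 0 then n - 1 else i - 1 := by
  split_ifs with h
  · subst h; rw [Nat.zero_add]; exact Nat.mod_eq_of_lt (by omega)
  · rw [show i + n - 1 = i - 1 + n by omega, Nat.add_mod_right, Nat.mod_eq_of_lt (by omega)]

lemma add_one_mod_self {k n : ℕ} (hk : k < n) :
    (k + 1) % n = if k = n - 1 then 0 else k + 1 := by
  split_ifs with h
  · rw [show k + 1 = n by omega, Nat.mod_self]
  · exact Nat.mod_eq_of_lt (by omega)

def steinDisplacement {R : Type*} [Ring R] (A B M : R) : R := M - A * M * B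

theorem sum_range_pow_mul_steinDisplacement_mul_pow {R : Type*} [Ring R] (A B M : R) (n : ℕ) :
    ∑ j ∈ Finset.range n, A ^ j * steinDisplacement A B M * B ^ j = M - A ^ n * M * B ^ n := by
  convert Finset.sum_range_sub' (fun j => A ^ j * M * B ^ j) n using 2 with j
  · rw [steinDisplacement, pow_succ A, pow_succ' B]
    simp only [mul_sub, sub_mul, mul_assoc]
  · simp

section Circulant

variable {n : ℕ} (f : ℝ)

lemma Zf_mul_single_of_succ_lt (i k : Fin n) (hi : (i : ℕ) + 1 < n) (c : ℂ) :
    Zf n f * single i k c = single ⟨i + 1, hi⟩ k c := by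
  ext a b
  by_cases hb : b = k
  · subst hb
    rw [mul_single_apply_same]
    simp only [Zf, single, of_apply, Fin.ext_iff, and_true]
    split_ifs <;> first | omega | simp
  · rw [mul_single_apply_of_ne _ _ _ _ _ hb]
    simp [single, Ne.symm hb]

lemma Zf_mul_single_of_succ_eq (i k : Fin n) (hi : (i : ℕ) + 1 = n) (c : ℂ) :
    Zf n f * single i k c = single ⟨0, by omega⟩ k (f * c) := by
  ext a b
  by_cases hb : b = k
  · subst hb
    rw [mul_single_apply_same]
    simp only [Zf, single, of_apply, Fin.ext_iff, and_true]
    split_ifs <;> first | omega | simp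
  · rw [mul_single_apply_of_ne _ _ _ _ _ hb]
    simp [single, Ne.symm hb]

lemma single_mul_Zf_of_pos (i k : Fin n) (hk : 0 < (k : ℕ)) (c : ℂ) :
    single i k c * Zf n f = single i ⟨k - 1, by omega⟩ c := by
  ext a b
  by_cases ha : a = i
  · subst ha
    rw [single_mul_apply_same]
    simp only [Zf, single, of_apply, Fin.ext_iff, true_and]
    split_ifs <;> first | omega | simp
  · rw [single_mul_apply_of_ne _ _ _ _ _ ha]
    simp [single, Ne.symm ha]

lemma Zf_pow_mul_single {j : ℕ} (i k : Fin n) (h : (i : ℕ) + j < n) (c : ℂ) :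
    Zf n f ^ j * single i k c = single ⟨i + j, h⟩ k c := by
  induction j with
  | zero => simp
  | succ j ih => rw [pow_succ', mul_assoc, ih (by omega), Zf_mul_single_of_succ_lt f _ _ h]; rfl

lemma single_mul_Zf_pow {j : ℕ} (i k : Fin n) (h : j ≤ (k : ℕ)) (c : ℂ) :
    single i k c * Zf n f ^ j = single i ⟨k - j, by omega⟩ c := by
  induction j with
  | zero => simp
  | succ j ih =>
    rw [pow_succ, ← mul_assoc, ih (by omega), single_mul_Zf_of_pos f _ _ (by simp only; omega)]
    congr 2

lemma Zf_pow_self : Zf n f ^ n = (f : ℂ) • 1 := by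
  have hcol : ∀ b : Fin n, Zf n f ^ n * single b b 1 = (f : ℂ) • single b b 1 := by
    intro b
    have hsplit : Zf n f ^ n = Zf n f ^ (b : ℕ) * (Zf n f * Zf n f ^ (n - 1 - b)) := by
      rw [← pow_succ', ← pow_add]; congr 1; omega
    rw [hsplit, mul_assoc, mul_assoc, Zf_pow_mul_single f b b (by omega),
      Zf_mul_single_of_succ_eq f _ _ (by simp only; omega), Zf_pow_mul_single f _ _ (by simp),
      smul_single]
    simp
  calc Zf n f ^ n = Zf n f ^ n * ∑ b : Fin n, single b b 1 := by rw [sum_single_one, mul_one]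
    _ = (f : ℂ) • 1 := by rw [Finset.mul_sum, Finset.sum_congr rfl fun b _ => hcol b,
        ← Finset.smul_sum, sum_single_one]

lemma Zf_pow_mul_corner_mul_Zf_pow (e : ℝ) {i j : ℕ} (hi : i < n) (hj : j < n) (c : ℂ) :
    Zf n e ^ i * single ⟨0, by omega⟩ ⟨n - 1, by omega⟩ c * Zf n f ^ j =
      single ⟨i, hi⟩ ⟨n - 1 - j, by omega⟩ c := by
  rw [Zf_pow_mul_single e _ _ (by simpa), single_mul_Zf_pow f _ _ (by simp only; omega)]
  simp

lemma sum_Zf_pow_mul_corner_mul_Zf_pow (e : ℝ) (hn : 0 < n) :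
    ∑ j : Fin n, Zf n e ^ (j : ℕ) * single ⟨0, hn⟩ ⟨n - 1, by omega⟩ 1 * Zf n f ^ (j : ℕ) =
      Jrev n := by
  rw [Finset.sum_congr rfl fun j _ => Zf_pow_mul_corner_mul_Zf_pow f e j.is_lt j.is_lt 1]
  ext a b
  rw [Matrix.sum_apply, Finset.sum_eq_single a
    (fun j _ hja => by simp [single, Fin.ext_iff, Fin.val_ne_of_ne hja]) (by simp)]
  simp only [single, Jrev, of_apply, Fin.ext_iff, true_and]
  split_ifs <;> first | rfl | omega

lemma sum_Zf_pow_mul_single_mul_Zf_pow (e : ℝ) (i k : Fin n) :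
    ∑ j : Fin n, Zf n e ^ (j : ℕ) * single i k 1 * Zf n f ^ (j : ℕ) =
      Zf n e ^ (i : ℕ) * Jrev n * Zf n f ^ (n - 1 - (k : ℕ)) := by
  have hn := i.pos
  have hk := k.is_lt
  have hcorner : single i k 1 =
      Zf n e ^ (i : ℕ) * single ⟨0, hn⟩ ⟨n - 1, by omega⟩ 1 * Zf n f ^ (n - 1 - (k : ℕ)) := by
    rw [Zf_pow_mul_corner_mul_Zf_pow f e i.is_lt (by omega)]
    congr 2; simp only [Fin.ext_iff]; omega
  rw [← sum_Zf_pow_mul_corner_mul_Zf_pow f e hn, Finset.mul_sum, Finset.sum_mul]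
  refine Finset.sum_congr rfl fun j _ => ?_
  rw [hcorner]
  simp only [← mul_assoc, pow_mul_comm (Zf n e) (j : ℕ) i]
  simp only [mul_assoc, pow_mul_comm (Zf n f) (n - 1 - (k : ℕ)) j]

theorem sum_Zf_pow_mul_mul_Zf_pow (e : ℝ) (X : Matrix (Fin n) (Fin n) ℂ) :
    ∑ j : Fin n, Zf n e ^ (j : ℕ) * X * Zf n f ^ (j : ℕ) =
      ∑ i : Fin n, ∑ k : Fin n,
        X i k • (Zf n e ^ (i : ℕ) * Jrev n * Zf n f ^ (n - 1 - (k : ℕ))) := by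
  conv_lhs => rw [matrix_eq_sum_single X]
  simp only [Finset.mul_sum, Finset.sum_mul]
  rw [Finset.sum_comm]
  refine Finset.sum_congr rfl fun i _ => ?_
  rw [Finset.sum_comm]
  refine Finset.sum_congr rfl fun k _ => ?_
  rw [← sum_Zf_pow_mul_single_mul_Zf_pow f e, Finset.smul_sum]
  refine Finset.sum_congr rfl fun j _ => ?_
  have hsingle : single i k (X i k) = X i k • single i k (1 : ℂ) := by
    rw [smul_single, smul_eq_mul, mul_one]
  rw [hsingle, Matrix.mul_smul, Matrix.smul_mul]

lemma Zf_mul_apply (M : Matrix (Fin n) (Fin n) ℂ) (i k : Fin n) :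
    (Zf n f * M) i k =
      (if (i : ℕ) = 0 then (f : ℂ) else 1) * M ⟨((i : ℕ) + n - 1) % n, Nat.mod_lt _ i.pos⟩ k := by
  have hpred := add_sub_one_mod_self i.is_lt
  rw [mul_apply, Finset.sum_eq_single ⟨((i : ℕ) + n - 1) % n, Nat.mod_lt _ i.pos⟩]
  · simp only [Zf, of_apply, hpred]
    split_ifs <;> first | omega | simp
  · intro j _ hj
    simp only [Ne, Fin.ext_iff, hpred] at hj
    simp only [Zf, of_apply]
    split_ifs at hj ⊢ <;> first | omega | simp
  · simp

lemma mul_Zf_apply (M : Matrix (Fin n) (Fin n) ℂ) (i k : Fin n) :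
    (M * Zf n f) i k = (f : ℂ) ^ gfun n k * M i ⟨((k : ℕ) + 1) % n, Nat.mod_lt _ k.pos⟩ := by
  have hsucc := add_one_mod_self k.is_lt
  rw [mul_apply, Finset.sum_eq_single ⟨((k : ℕ) + 1) % n, Nat.mod_lt _ k.pos⟩]
  · simp only [Zf, of_apply, hsucc, gfun]
    by_cases hk : (k : ℕ) = n - 1 <;> simp [hk, mul_comm]
  · intro j _ hj
    simp only [Ne, Fin.ext_iff, hsucc] at hj
    simp only [Zf, of_apply]
    split_ifs at hj ⊢ <;> first | omega | simp
  · simp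

end Circulant

/-- Stein-type LCU decomposition: with m-hat_{i,k} the (i,k) entry of Δ_{Z_1,Z_{−1}}[M],
M = (1/2) · Σ_{i,k} m-hat_{i,k} · Z_1^i · J · Z_{−1}^{n−1−k}. -/
theorem stein_LCU_decomposition (n : ℕ) (M : Matrix (Fin n) (Fin n) ℂ) :
    M = (1 / 2 : ℂ) •
      ∑ i : Fin n, ∑ k : Fin n,
        (M i k - (-1 : ℂ) ^ gfun n (k : ℕ) *
            M ⟨((i : ℕ) + n - 1) % n, Nat.mod_lt _ i.pos⟩
              ⟨((k : ℕ) + 1) % n, Nat.mod_lt _ k.pos⟩) •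
          (Zf n 1 ^ (i : ℕ) * Jrev n * Zf n (-1) ^ (n - 1 - (k : ℕ))) := by
  have hdisp : ∀ i k : Fin n,
      M i k - (-1 : ℂ) ^ gfun n (k : ℕ) * M ⟨((i : ℕ) + n - 1) % n, Nat.mod_lt _ i.pos⟩
        ⟨((k : ℕ) + 1) % n, Nat.mod_lt _ k.pos⟩ = steinDisplacement (Zf n 1) (Zf n (-1)) M i k := by
    intro i k
    rw [steinDisplacement, Matrix.sub_apply, mul_Zf_apply, Zf_mul_apply]
    simp
  simp_rw [hdisp]
  rw [← sum_Zf_pow_mul_mul_Zf_pow,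
    Fin.sum_univ_eq_sum_range (fun j => Zf n 1 ^ j * _ * Zf n (-1) ^ j),
    sum_range_pow_mul_steinDisplacement_mul_pow, Zf_pow_self, Zf_pow_self]
  push_cast
  simp only [one_smul, one_mul, neg_smul, mul_neg, mul_one, sub_neg_eq_add]
  module
end

section
/- Let H_n ∈ ℂ^{n×n} be the Hankel matrix with entries (H_n)_{i,k} = h_{i+k} for a given sequence {h_j}_{j=0}^{2n−2} of complex numbers. Then H_n = (1/2)·[ 2·h_{n−1}·J + Σ_{j=1}^{n−1} (h_{n−1+j} + h_{j−1})·Z_1^j·J + Σ_{j=1}^{n−1} (h_{n−1+j} − h_{j−1})·Z_{−1}^j·J ]. -/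
open Matrix

/-!
Write `E_s` for the 0/1 matrix supported on the antidiagonal `i + k = s`, so that
`H_n = ∑_{s ≤ 2n-2} h_s E_s` and `J = E_{n-1}`. For `1 ≤ j ≤ n - 1` the matrix `Z_f^j J` is
`E_{n-1+j} + f E_{j-1}`: the upper part of `Z_f^j` is the shifted identity and its wrapped-around
part is scaled by `f`. Hence `(Z_1^j J + Z_{-1}^j J) / 2 = E_{n-1+j}` and
`(Z_1^j J - Z_{-1}^j J) / 2 = E_{j-1}`, and together with `J` these exhaust the `2n - 1`
antidiagonals.
-/

lemma mul_Zf_apply_s18 {n : ℕ} (f : ℝ) (A : Matrix (Fin n) (Fin n) ℂ) (i k : Fin n) :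
    (A * Zf n f) i k =
      if hk : (k : ℕ) + 1 < n then A i ⟨k + 1, hk⟩ else f * A i ⟨0, i.pos⟩ := by
  rw [mul_apply]
  split_ifs with hk
  · rw [Finset.sum_eq_single ⟨k + 1, hk⟩]
    · simp [Zf]
    · intro m _ hm
      have : (m : ℕ) ≠ k + 1 := fun h => hm (Fin.ext h)
      simp only [Zf, of_apply]
      split_ifs <;> first | omega | simp
    · simp
  · rw [Finset.sum_eq_single ⟨0, i.pos⟩]
    · simp [Zf, mul_comm, show (k : ℕ) = n - 1 by omega]
    · intro m _ hm
      have : (m : ℕ) ≠ 0 := fun h => hm (Fin.ext h)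
      simp only [Zf, of_apply]
      split_ifs <;> first | omega | simp
    · simp

lemma Zf_pow_apply {n j : ℕ} (f : ℝ) (hj : j ≤ n) (i k : Fin n) :
    (Zf n f ^ j) i k =
      if (i : ℕ) = k + j then 1 else if (i : ℕ) + n = k + j then (f : ℂ) else 0 := by
  induction j generalizing k with
  | zero =>
    have := k.isLt
    simp only [pow_zero, one_apply, Fin.ext_iff, add_zero]
    split_ifs <;> first | rfl | omega
  | succ j ih =>
    rw [pow_succ, mul_Zf_apply_s18]
    have := i.isLt
    split_ifs with hk <;> rw [ih (by omega)] <;> dsimp only <;> split_ifs <;> first | omega | simp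

lemma mul_Jrev_apply {n : ℕ} (A : Matrix (Fin n) (Fin n) ℂ) (i k : Fin n) :
    (A * Jrev n) i k = A i k.rev := by
  rw [mul_apply, Finset.sum_eq_single k.rev]
  · rw [Jrev, of_apply, if_pos (by rw [Fin.val_rev]; omega), mul_one]
  · intro m _ hm
    have : (m : ℕ) + k ≠ n - 1 := fun h => hm (Fin.ext (by rw [Fin.val_rev]; omega))
    simp [Jrev, this]
  · simp

def antidiagOnes (R : Type*) [Zero R] [One R] (n s : ℕ) : Matrix (Fin n) (Fin n) R :=
  of fun i k => if (i : ℕ) + k = s then 1 else 0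

lemma Jrev_eq_antidiagOnes (n : ℕ) : Jrev n = antidiagOnes ℂ n (n - 1) := rfl

lemma Zf_pow_mul_Jrev {n j : ℕ} (f : ℝ) (hj₁ : 1 ≤ j) (hj : j ≤ n) :
    Zf n f ^ j * Jrev n =
      antidiagOnes ℂ n (n - 1 + j) + (f : ℂ) • antidiagOnes ℂ n (j - 1) := by
  ext i k
  rw [mul_Jrev_apply, Zf_pow_apply f hj]
  simp only [Matrix.add_apply, Matrix.smul_apply, antidiagOnes, of_apply, Fin.val_rev,
    smul_eq_mul]
  split_ifs <;> first | omega | simp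

lemma hankel_eq_sum_antidiagOnes {R : Type*} [Semiring R] {n : ℕ} (h : ℕ → R)
    {H : Matrix (Fin n) (Fin n) R} (hH : ∀ i k : Fin n, H i k = h (i + k)) :
    H = ∑ s ∈ Finset.range (2 * n - 1), h s • antidiagOnes R n s := by
  ext i k
  simp only [hH, Matrix.sum_apply, Matrix.smul_apply, antidiagOnes, of_apply, smul_eq_mul,
    mul_ite, mul_one, mul_zero, Finset.sum_ite_eq, Finset.mem_range]
  rw [if_pos (by omega)]

lemma sum_range_two_mul_add_one {M : Type*} [AddCommMonoid M] (g : ℕ → M) (m : ℕ) :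
    ∑ s ∈ Finset.range (2 * m + 1), g s =
      ∑ j ∈ Finset.Icc 1 m, g (j - 1) + g m + ∑ j ∈ Finset.Icc 1 m, g (m + j) := by
  rw [show 2 * m + 1 = (m + 1) + m by ring, Finset.sum_range_add, Finset.sum_range_succ,
    ← Finset.Ico_add_one_right_eq_Icc, Finset.sum_Ico_eq_sum_range, Finset.sum_Ico_eq_sum_range]
  simp [add_comm, add_left_comm]

/-- LCU decomposition of a Hankel matrix (H_n)_{i,k} = h_{i+k}:
H_n = (1/2)·[2·h_{n−1}·J + Σ_{j=1}^{n−1}(h_{n−1+j} + h_{j−1})·Z_1^j·J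
+ Σ_{j=1}^{n−1}(h_{n−1+j} − h_{j−1})·Z_{−1}^j·J]. -/
theorem hankel_LCU_decomposition (n : ℕ) (h : ℕ → ℂ)
    (H : Matrix (Fin n) (Fin n) ℂ)
    (hH : ∀ i k : Fin n, H i k = h ((i : ℕ) + (k : ℕ))) :
    H = (1 / 2 : ℂ) •
      ((2 * h (n - 1)) • Jrev n +
        ∑ j ∈ Finset.Icc 1 (n - 1), (h (n - 1 + j) + h (j - 1)) • (Zf n 1 ^ j * Jrev n) +
        ∑ j ∈ Finset.Icc 1 (n - 1), (h (n - 1 + j) - h (j - 1)) • (Zf n (-1) ^ j * Jrev n)) := by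
  rcases Nat.eq_zero_or_pos n with rfl | hn
  · exact Subsingleton.elim _ _
  have hZJ (f : ℝ) (j : ℕ) (hj : j ∈ Finset.Icc 1 (n - 1)) :=
    Zf_pow_mul_Jrev (n := n) f (Finset.mem_Icc.1 hj).1 (by grind)
  rw [Finset.sum_congr rfl fun j hj => congrArg _ (hZJ 1 j hj),
    Finset.sum_congr rfl fun j hj => congrArg _ (hZJ (-1) j hj),
    hankel_eq_sum_antidiagOnes h hH, show 2 * n - 1 = 2 * (n - 1) + 1 by omega,
    sum_range_two_mul_add_one, Jrev_eq_antidiagOnes]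
  simp only [Complex.ofReal_one, Complex.ofReal_neg, one_smul, neg_smul, ← sub_eq_add_neg,
    smul_add, smul_sub, add_smul, sub_smul, Finset.sum_add_distrib, Finset.sum_sub_distrib]
  module
end
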